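/- arXiv:1109.4335 — 2 statements merged into one kernel-verified Lean document; each statement's English description precedes it below -/
import Mathlib

section
/- The iterates of one-step revision satisfy, for every n ≥ 1 and every literal p ∈ P: v⁽ⁿ⁾(p) = max( v⁽⁰⁾(p), max over clauses C ∈ D with p ∈ C and C ≠ {p, ¬p} of (min over q ∈ C \ {p} of v⁽ⁿ⁻¹⁾(¬q)) ). -/
/-- The box of valuations: functions `P → ℝ` with values in `[0,1]`. -/
def unitBox (P : Type*) : Set (P → ℝ) := {v | ∀ p, v p ∈ Set.Icc (0:ℝ) 1}

/-- The one-step revision of a valuation `v` with respect to the doctrine `D`: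
`v'(p)` is the max over clauses `C ∈ D` with `p ∈ C` of the min over `q ∈ C \ {p}`
of `v(¬q)`. -/
noncomputable def step {P : Type*} (neg : P → P) (D : Finset (Finset P))
    (v : P → ℝ) : P → ℝ :=
  fun p => sSup {m : ℝ | ∃ C ∈ D, p ∈ C ∧
    m = sInf {b : ℝ | ∃ q ∈ C, q ≠ p ∧ b = v (neg q)}}

/-!
The excluded-middle clause `{p, ¬p}` contributes exactly `w(¬¬p) = w(p)` to the revision of `p`,
so `w'(p) = max (w(p), R_w(p))`, where `R_w(p)` (`restSup`) is the max over the remaining clauses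
(`0` if there are none, which is harmless as long as `w ≥ 0`). Hence the iterates increase, and
since `R_w` is monotone in `w`, unfolding `v⁽ⁿ⁾(p) = max (v⁽ⁿ⁻¹⁾(p), R_{v⁽ⁿ⁻¹⁾}(p))` once more
lets the term `R_{v⁽ⁿ⁻²⁾}(p)` be absorbed by `R_{v⁽ⁿ⁻¹⁾}(p)`.
-/

namespace Real

variable {α : Type*}

theorem sSup_insert_of_finite {s : Set ℝ} (hs : s.Finite) {x : ℝ} (hx : 0 ≤ x) :
    sSup (insert x s) = max x (sSup s) := by
  rcases s.eq_empty_or_nonempty with rfl | hne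
  · simp [hx]
  · exact csSup_insert hs.bddAbove hne

theorem sSup_image_mono {s : Set α} (hs : s.Finite) {f g : α → ℝ} (h : ∀ a ∈ s, f a ≤ g a) :
    sSup (f '' s) ≤ sSup (g '' s) := by
  rcases s.eq_empty_or_nonempty with rfl | hne
  · simp
  · refine csSup_le (hne.image f) ?_
    rintro _ ⟨a, ha, rfl⟩
    exact le_csSup_of_le (hs.image g).bddAbove (Set.mem_image_of_mem g ha) (h a ha)

theorem sInf_image_mono {s : Set α} (hs : s.Finite) {f g : α → ℝ} (h : ∀ a ∈ s, f a ≤ g a) :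
    sInf (f '' s) ≤ sInf (g '' s) := by
  rcases s.eq_empty_or_nonempty with rfl | hne
  · simp
  · refine le_csInf (hne.image g) ?_
    rintro _ ⟨a, ha, rfl⟩
    exact csInf_le_of_le (hs.image f).bddBelow (Set.mem_image_of_mem f ha) (h a ha)

end Real

namespace Revision

variable {P : Type*} (neg : P → P)

noncomputable def clauseValue (w : P → ℝ) (p : P) (C : Finset P) : ℝ :=
  sInf {b : ℝ | ∃ q ∈ C, q ≠ p ∧ b = w (neg q)}

theorem clauseValue_mono {w w' : P → ℝ} (h : w ≤ w') (p : P) (C : Finset P) :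
    clauseValue neg w p C ≤ clauseValue neg w' p C := by
  have himage : ∀ u : P → ℝ,
      clauseValue neg u p C = sInf ((fun q => u (neg q)) '' {q | q ∈ C ∧ q ≠ p}) := by
    intro u
    simp only [clauseValue, Set.image, Set.mem_ofPred_eq, and_assoc, eq_comm]
  rw [himage, himage]
  exact Real.sInf_image_mono ((C.finite_toSet).subset fun q hq => hq.1) fun q _ => h (neg q)

variable [DecidableEq P]

theorem clauseValue_pair (hinv : ∀ p, neg (neg p) = p) (hneg : ∀ p, neg p ≠ p)
    (w : P → ℝ) (p : P) : clauseValue neg w p {p, neg p} = w p := by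
  simp [clauseValue, hneg, hinv]

variable (D : Finset (Finset P))

noncomputable def restSup (w : P → ℝ) (p : P) : ℝ :=
  sSup {m : ℝ | ∃ C ∈ D, p ∈ C ∧ C ≠ ({p, neg p} : Finset P) ∧ m = clauseValue neg w p C}

theorem restSup_mono {w w' : P → ℝ} (h : w ≤ w') (p : P) :
    restSup neg D w p ≤ restSup neg D w' p := by
  have himage : ∀ u : P → ℝ, restSup neg D u p =
      sSup ((clauseValue neg u p) '' {C | C ∈ D ∧ p ∈ C ∧ C ≠ ({p, neg p} : Finset P)}) := by
    intro u
    simp only [restSup, Set.image, Set.mem_ofPred_eq, and_assoc, eq_comm]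
  rw [himage, himage]
  exact Real.sSup_image_mono ((D.finite_toSet).subset fun C hC => hC.1)
    fun C _ => clauseValue_mono neg h p C

variable {neg D} (hinv : ∀ p, neg (neg p) = p) (hneg : ∀ p, neg p ≠ p)
  (hem : ∀ p : P, ({p, neg p} : Finset P) ∈ D)
include hinv hneg hem

theorem step_eq_max_restSup {w : P → ℝ} {p : P} (hw : 0 ≤ w p) :
    step neg D w p = max (w p) (restSup neg D w p) := by
  have hsplit : {m : ℝ | ∃ C ∈ D, p ∈ C ∧ m = clauseValue neg w p C} =
      insert (w p) {m : ℝ | ∃ C ∈ D, p ∈ C ∧ C ≠ ({p, neg p} : Finset P) ∧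
        m = clauseValue neg w p C} := by
    ext m
    constructor
    · rintro ⟨C, hC, hpC, rfl⟩
      by_cases hpair : C = {p, neg p}
      · subst hpair
        exact Or.inl (clauseValue_pair neg hinv hneg w p)
      · exact Or.inr ⟨C, hC, hpC, hpair, rfl⟩
    · rintro (rfl | ⟨C, hC, hpC, -, rfl⟩)
      · exact ⟨_, hem p, Finset.mem_insert_self _ _, (clauseValue_pair neg hinv hneg w p).symm⟩
      · exact ⟨C, hC, hpC, rfl⟩
  have hfinite : {m : ℝ | ∃ C ∈ D, p ∈ C ∧ C ≠ ({p, neg p} : Finset P) ∧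
      m = clauseValue neg w p C}.Finite :=
    (D.finite_toSet.image (clauseValue neg w p)).subset
      fun m ⟨C, hC, _, _, hm⟩ => ⟨C, hC, hm.symm⟩
  exact (congrArg sSup hsplit).trans (Real.sSup_insert_of_finite hfinite hw)

theorem le_step {w : P → ℝ} (hw : 0 ≤ w) : w ≤ step neg D w := fun p => by
  rw [step_eq_max_restSup hinv hneg hem (hw p)]
  exact le_max_left _ _

variable {v : P → ℝ} (hv : 0 ≤ v)
include hv

theorem iterate_step_nonneg (n : ℕ) : 0 ≤ (step neg D)^[n] v := by
  induction n with
  | zero => exact hv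
  | succ n ih =>
    rw [Function.iterate_succ_apply']
    exact ih.trans (le_step hinv hneg hem ih)

theorem iterate_step_le_succ (n : ℕ) : (step neg D)^[n] v ≤ (step neg D)^[n + 1] v := by
  rw [Function.iterate_succ_apply']
  exact le_step hinv hneg hem (iterate_step_nonneg hinv hneg hem hv n)

theorem iterate_succ_step_eq (n : ℕ) (p : P) :
    (step neg D)^[n + 1] v p = max (v p) (restSup neg D ((step neg D)^[n] v) p) := by
  induction n generalizing p with
  | zero => exact step_eq_max_restSup hinv hneg hem (hv p)
  | succ n ih =>
    rw [Function.iterate_succ_apply',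
      step_eq_max_restSup hinv hneg hem (iterate_step_nonneg hinv hneg hem hv (n + 1) p), ih,
      max_assoc, max_eq_right (restSup_mono neg D (iterate_step_le_succ hinv hneg hem hv n) p)]

end Revision

theorem stmt4_general {P : Type*} [DecidableEq P]
    (neg : P → P) (hinv : ∀ p, neg (neg p) = p) (hneg : ∀ p, neg p ≠ p)
    (D : Finset (Finset P))
    (hem : ∀ p : P, ({p, neg p} : Finset P) ∈ D)
    (v : P → ℝ) (hv : v ∈ unitBox P)
    (n : ℕ) (hn : 1 ≤ n) (p : P) :
    (step neg D)^[n] v p =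
      max (v p)
        (sSup {m : ℝ | ∃ C ∈ D, p ∈ C ∧ C ≠ ({p, neg p} : Finset P) ∧
          m = sInf {b : ℝ | ∃ q ∈ C, q ≠ p ∧
            b = (step neg D)^[n - 1] v (neg q)}}) := by
  obtain ⟨n, rfl⟩ := Nat.exists_eq_add_of_le' hn
  exact Revision.iterate_succ_step_eq hinv hneg hem (fun q => (hv q).1) n p

/-- For `n ≥ 1`, `v⁽ⁿ⁾(p)` equals the max of `v⁽⁰⁾(p)` and the max over clauses
`C ∈ D` with `p ∈ C` and `C ≠ {p, ¬p}` of the min over `q ∈ C \ {p}` of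
`v⁽ⁿ⁻¹⁾(¬q)` (the max over an empty collection being 0). -/
theorem stmt4 {P : Type*} [Fintype P] [DecidableEq P]
    (neg : P → P) (hinv : ∀ p, neg (neg p) = p) (hneg : ∀ p, neg p ≠ p)
    (D : Finset (Finset P))
    (hcard : ∀ C ∈ D, 2 ≤ C.card)
    (hem : ∀ p : P, ({p, neg p} : Finset P) ∈ D)
    (v : P → ℝ) (hv : v ∈ unitBox P)
    (n : ℕ) (hn : 1 ≤ n) (p : P) :
    (step neg D)^[n] v p =
      max (v p)
        (sSup {m : ℝ | ∃ C ∈ D, p ∈ C ∧ C ≠ ({p, neg p} : Finset P) ∧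
          m = sInf {b : ℝ | ∃ q ∈ C, q ≠ p ∧
            b = (step neg D)^[n - 1] v (neg q)}}) :=
  stmt4_general neg hinv hneg D hem v hv n hn p
end

section
/- Let the initial valuation satisfy v(s_x) = v(¬s_x) = 0 for all x ∈ I, with arbitrary values v(p_{xy}) ∈ [0,1]. Set c_x = max over y ≠ x of v(p_{yx}). Then the upper revised valuation v* (the eventual value of the iterates of T) satisfies: v*(¬s_x) = c_x for every x; v*(s_x) = min over z ≠ x of c_z for every x; and v*(p_{xy}) = max( v(p_{xy}), min over z ≠ x of c_z ) for all distinct x, y. -/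
/-- A valuation for the supremacy doctrine: degrees of belief for the literals
`s_x` ("x is supreme"), `¬s_x`, and `p_{xy}` ("x is preferable to y", for
distinct `x, y`), under the identification `¬p_{xy} = p_{yx}`. -/
structure SVal (I : Type*) where
  s : I → ℝ
  ns : I → ℝ
  p : I → I → ℝ

/-- Max over a (possibly empty) index set of reals: the empty max is `0`
(note `Real.sSup_empty = 0`). -/
noncomputable def sup0 (S : Set ℝ) : ℝ := sSup S

open Classical in
/-- Min over a (possibly empty) index set of reals: the empty min is `1`. -/
noncomputable def inf1 (S : Set ℝ) : ℝ := if S.Nonempty then sInf S else 1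

/-- The one-step revision operator associated with the supremacy doctrine. -/
noncomputable def Tsup {I : Type*} (v : SVal I) : SVal I where
  s := fun x => max (v.s x)
    (max (inf1 {b : ℝ | ∃ y, y ≠ x ∧ b = v.ns y})
         (inf1 {b : ℝ | ∃ y, y ≠ x ∧ b = v.p x y}))
  ns := fun x => max (v.ns x) (sup0 {b : ℝ | ∃ y, y ≠ x ∧ b = v.p y x})
  p := fun x y => max (v.p x y)
    (max (v.s x)
         (min (v.ns y) (inf1 {b : ℝ | ∃ z, z ≠ x ∧ z ≠ y ∧ b = v.p y z})))

/- `T` is monotone and inflationary, so the iterates from `v` stay below any `w ≥ v` with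
`T w ≤ w`, and their eventual value is a fixed point. The valuation `w` given by the right-hand
sides is such a post-fixed point, and every fixed point above `v` dominates `w`, so the eventual
value is `w`. The crucial inequality `T w ≤ w` at `p_{xy}` holds because `min_{z ≠ x} c_z` is
attained (there are at least two indices) at some `z₀`: either `z₀ = y`, or `p_{y z₀}` enters
the minimum defining the revision and `w(p_{y z₀}) ≤ c_{z₀}`. -/

section Iterate

theorem Function.isFixedPt_of_iterate_eventually_eq {α : Type*} {f : α → α} {v u : α}
    (h : ∃ N, ∀ n ≥ N, f^[n] v = u) : Function.IsFixedPt f u := by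
  obtain ⟨N, hN⟩ := h
  have hsucc := hN (N + 1) N.le_succ
  rwa [Function.iterate_succ_apply', hN N le_rfl] at hsucc

variable {α : Type*} [PartialOrder α] {f : α → α}

theorem Monotone.iterate_le_of_map_le_self (hf : Monotone f) {v w : α} (hvw : v ≤ w)
    (hw : f w ≤ w) (n : ℕ) : f^[n] v ≤ w :=
  (hf.iterate n hvw).trans (antitone_iterate_of_map_le hf hw (Nat.zero_le n))

theorem Monotone.eq_of_iterate_eventually_eq (hf : Monotone f) (hinfl : id ≤ f) {v w u : α}
    (hvw : v ≤ w) (hw : f w ≤ w) (hmin : ∀ u, Function.IsFixedPt f u → v ≤ u → w ≤ u)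
    (h : ∃ N, ∀ n ≥ N, f^[n] v = u) : u = w := by
  obtain ⟨N, hN⟩ := h
  have hfix := Function.isFixedPt_of_iterate_eventually_eq ⟨N, hN⟩
  rw [← hN N le_rfl] at hfix ⊢
  exact le_antisymm (hf.iterate_le_of_map_le_self hvw hw N)
    (hmin _ hfix (Function.id_le_iterate_of_id_le hinfl N v))

end Iterate

section FiniteExtrema

variable {ι : Type*} {S : Set ℝ} {a b : ℝ}

theorem setOf_exists_and_eq_finite [Finite ι] (P : ι → Prop) (f : ι → ℝ) :
    {b : ℝ | ∃ y, P y ∧ b = f y}.Finite :=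
  (Set.finite_range f).subset fun _ ⟨y, _, hb⟩ => ⟨y, hb.symm⟩

theorem le_sup0 (hS : S.Finite) (hb : b ∈ S) : b ≤ sup0 S :=
  le_csSup hS.bddAbove hb

theorem sup0_le (h : ∀ b ∈ S, b ≤ a) (ha : 0 ≤ a) : sup0 S ≤ a :=
  Real.sSup_le h ha

theorem sup0_nonneg (h : ∀ b ∈ S, 0 ≤ b) : 0 ≤ sup0 S :=
  Real.sSup_nonneg h

theorem inf1_le (hS : S.Finite) (hb : b ∈ S) : inf1 S ≤ b := by
  rw [inf1, if_pos ⟨b, hb⟩]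
  exact csInf_le hS.bddBelow hb

theorem le_inf1 (h : ∀ b ∈ S, a ≤ b) (ha : a ≤ 1) : a ≤ inf1 S := by
  unfold inf1
  split_ifs with hne
  · exact le_csInf hne h
  · exact ha

theorem inf1_mem (hS : S.Finite) (hne : S.Nonempty) : inf1 S ∈ S := by
  rw [inf1, if_pos hne]
  exact hne.csInf_mem hS

variable [Finite ι] {P : ι → Prop} {f g : ι → ℝ}

theorem sup0_mono (h : ∀ y, P y → f y ≤ g y) :
    sup0 {b | ∃ y, P y ∧ b = f y} ≤ sup0 {b | ∃ y, P y ∧ b = g y} := by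
  by_cases hP : ∃ y, P y
  · obtain ⟨y₀, hy₀⟩ := hP
    refine csSup_le ⟨f y₀, y₀, hy₀, rfl⟩ ?_
    rintro _ ⟨y, hy, rfl⟩
    exact (h y hy).trans (le_sup0 (setOf_exists_and_eq_finite P g) ⟨y, hy, rfl⟩)
  · push Not at hP
    simp [hP]

theorem inf1_mono (h : ∀ y, P y → f y ≤ g y) :
    inf1 {b | ∃ y, P y ∧ b = f y} ≤ inf1 {b | ∃ y, P y ∧ b = g y} := by
  by_cases hP : ∃ y, P y
  · obtain ⟨y₀, hy₀⟩ := hP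
    conv_rhs => rw [inf1, if_pos ⟨g y₀, y₀, hy₀, rfl⟩]
    refine le_csInf ⟨g y₀, y₀, hy₀, rfl⟩ ?_
    rintro _ ⟨y, hy, rfl⟩
    exact (inf1_le (setOf_exists_and_eq_finite P f) ⟨y, hy, rfl⟩).trans (h y hy)
  · push Not at hP
    simp [hP]

end FiniteExtrema

namespace SVal

variable {I : Type*}

instance : PartialOrder (SVal I) :=
  PartialOrder.lift (fun u => (u.s, u.ns, u.p)) fun ⟨_, _, _⟩ ⟨_, _, _⟩ h => by
    simp only [Prod.mk.injEq] at h
    obtain ⟨rfl, rfl, rfl⟩ := h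
    rfl

theorem le_def {u u' : SVal I} : u ≤ u' ↔ u.s ≤ u'.s ∧ u.ns ≤ u'.ns ∧ u.p ≤ u'.p :=
  Iff.rfl

theorem le_Tsup : id ≤ Tsup (I := I) := fun _ =>
  le_def.mpr ⟨fun _ => le_max_left _ _, fun _ => le_max_left _ _, fun _ _ => le_max_left _ _⟩

theorem monotone_Tsup [Finite I] : Monotone (Tsup (I := I)) := by
  intro u u' h
  obtain ⟨hs, hns, hp⟩ := le_def.mp h
  refine le_def.mpr ⟨fun x => ?_, fun x => ?_, fun x y => ?_⟩
  · exact max_le_max (hs x) (max_le_max (inf1_mono fun y _ => hns y) (inf1_mono fun y _ => hp x y))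
  · exact max_le_max (hns x) (sup0_mono fun y _ => hp y x)
  · simp only [Tsup, ← and_assoc]
    exact max_le_max (hp x y) (max_le_max (hs x) (min_le_min (hns y) (inf1_mono fun z _ => hp y z)))

end SVal

section Minimax

variable {I : Type*}

/-- `c_x = max_{y ≠ x} v(p_{yx})`. -/
noncomputable def SVal.maxChallenge (v : SVal I) (x : I) : ℝ :=
  sup0 {b : ℝ | ∃ y, y ≠ x ∧ b = v.p y x}

noncomputable def minOthers (c : I → ℝ) (x : I) : ℝ :=
  inf1 {b : ℝ | ∃ z, z ≠ x ∧ b = c z}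

noncomputable def SVal.minimax (v : SVal I) : SVal I where
  s := minOthers v.maxChallenge
  ns := v.maxChallenge
  p x y := max (v.p x y) (minOthers v.maxChallenge x)

theorem SVal.maxChallenge_nonneg {v : SVal I} (hp : ∀ x y, x ≠ y → 0 ≤ v.p x y) (x : I) :
    0 ≤ v.maxChallenge x :=
  sup0_nonneg fun _ ⟨y, hy, hb⟩ => hb ▸ hp y x hy

theorem minOthers_nonneg {c : I → ℝ} (hc : ∀ x, 0 ≤ c x) (x : I) : 0 ≤ minOthers c x :=
  le_inf1 (fun _ ⟨z, _, hb⟩ => hb ▸ hc z) zero_le_one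

theorem SVal.le_minimax {v : SVal I} (hp : ∀ x y, x ≠ y → 0 ≤ v.p x y)
    (hs : ∀ x, v.s x = 0) (hns : ∀ x, v.ns x = 0) : v ≤ v.minimax :=
  le_def.mpr ⟨fun x => (hs x).trans_le (minOthers_nonneg (maxChallenge_nonneg hp) x),
    fun x => (hns x).trans_le (maxChallenge_nonneg hp x), fun _ _ => le_max_left _ _⟩

variable [Finite I]

theorem SVal.p_le_maxChallenge (v : SVal I) {x y : I} (h : x ≠ y) :
    v.p x y ≤ v.maxChallenge y :=
  le_sup0 (setOf_exists_and_eq_finite _ _) ⟨x, h, rfl⟩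

theorem minOthers_le (c : I → ℝ) {x z : I} (h : z ≠ x) : minOthers c x ≤ c z :=
  inf1_le (setOf_exists_and_eq_finite _ _) ⟨z, h, rfl⟩

theorem exists_minOthers_eq [Nontrivial I] (c : I → ℝ) (x : I) :
    ∃ z, z ≠ x ∧ minOthers c x = c z :=
  inf1_mem (setOf_exists_and_eq_finite _ _) (let ⟨z, hz⟩ := exists_ne x; ⟨c z, z, hz, rfl⟩)

theorem SVal.minimax_p_le_maxChallenge (v : SVal I) {x y : I} (h : x ≠ y) :
    v.minimax.p x y ≤ v.maxChallenge y :=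
  max_le (v.p_le_maxChallenge h) (minOthers_le _ h.symm)

theorem SVal.Tsup_minimax_le [Nontrivial I] {v : SVal I} (hp : ∀ x y, x ≠ y → 0 ≤ v.p x y) :
    Tsup v.minimax ≤ v.minimax := by
  refine le_def.mpr ⟨fun x => ?_, fun x => ?_, fun x y => ?_⟩
  · refine max_le le_rfl (max_le le_rfl ?_)
    exact inf1_mono fun y hy => v.minimax_p_le_maxChallenge hy.symm
  · refine max_le le_rfl (sup0_le ?_ (maxChallenge_nonneg hp x))
    rintro _ ⟨y, hy, rfl⟩
    exact v.minimax_p_le_maxChallenge hy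
  · refine max_le le_rfl (max_le (le_max_right _ _) (le_trans ?_ (le_max_right _ _)))
    obtain ⟨z₀, hz₀x, hz₀⟩ := exists_minOthers_eq v.maxChallenge x
    rw [hz₀]
    by_cases hz₀y : z₀ = y
    · exact hz₀y ▸ min_le_left _ _
    · calc _ ≤ inf1 {b : ℝ | ∃ z, z ≠ x ∧ z ≠ y ∧ b = v.minimax.p y z} :=
            min_le_right _ _
        _ ≤ v.minimax.p y z₀ := inf1_le ((Set.finite_range fun z => v.minimax.p y z).subset
            fun _ ⟨z, _, _, hb⟩ => ⟨z, hb.symm⟩) ⟨z₀, hz₀x, hz₀y, rfl⟩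
        _ ≤ v.maxChallenge z₀ := v.minimax_p_le_maxChallenge (Ne.symm hz₀y)

theorem SVal.minimax_le_of_isFixedPt {v u : SVal I} (hu : Function.IsFixedPt Tsup u)
    (hvu : v ≤ u) : v.minimax ≤ u := by
  obtain ⟨-, -, hp⟩ := le_def.mp hvu
  have hns : v.maxChallenge ≤ u.ns := fun x => by
    rw [← hu]
    exact (sup0_mono fun y _ => hp y x).trans (le_max_right _ _)
  have hs : minOthers v.maxChallenge ≤ u.s := fun x => by
    rw [← hu]
    exact (inf1_mono fun y _ => hns y).trans ((le_max_left _ _).trans (le_max_right _ _))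
  refine le_def.mpr ⟨hs, hns, fun x y => max_le (hp x y) ((hs x).trans ?_)⟩
  calc u.s x ≤ (Tsup u).p x y := (le_max_left _ _).trans (le_max_right _ _)
    _ = u.p x y := by rw [hu]

end Minimax

theorem stmt6_general {I : Type*} [Fintype I]
    (hcard : 2 ≤ Fintype.card I)
    (v : SVal I)
    (hbox : ∀ x y : I, x ≠ y → v.p x y ∈ Set.Icc (0:ℝ) 1)
    (hs : ∀ x, v.s x = 0) (hns : ∀ x, v.ns x = 0)
    (c : I → ℝ) (hc : ∀ x, c x = sup0 {b : ℝ | ∃ y, y ≠ x ∧ b = v.p y x})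
    (vstar : SVal I) (hstar : ∃ N : ℕ, ∀ n ≥ N, Tsup^[n] v = vstar) :
    (∀ x, vstar.ns x = c x) ∧
    (∀ x, vstar.s x = inf1 {b : ℝ | ∃ z, z ≠ x ∧ b = c z}) ∧
    (∀ x y : I, x ≠ y →
      vstar.p x y = max (v.p x y) (inf1 {b : ℝ | ∃ z, z ≠ x ∧ b = c z})) := by
  have : Nontrivial I := Fintype.one_lt_card_iff_nontrivial.mp hcard
  have hp : ∀ x y, x ≠ y → 0 ≤ v.p x y := fun x y h => (hbox x y h).1
  obtain rfl : c = v.maxChallenge := funext hc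
  obtain rfl : vstar = v.minimax :=
    SVal.monotone_Tsup.eq_of_iterate_eventually_eq SVal.le_Tsup (SVal.le_minimax hp hs hns)
      (SVal.Tsup_minimax_le hp) (fun _ => SVal.minimax_le_of_isFixedPt) hstar
  exact ⟨fun _ => rfl, fun _ => rfl, fun _ _ _ => rfl⟩

/-- Minimax rule: with zero initial belief in the `s_x` and `¬s_x`, the upper
revised valuation of the supremacy doctrine is given in terms of
`c_x = max_{y ≠ x} v(p_{yx})`. -/
theorem stmt6 {I : Type*} [Fintype I] [DecidableEq I]
    (hcard : 2 ≤ Fintype.card I)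
    (v : SVal I)
    (hbox : ∀ x y : I, x ≠ y → v.p x y ∈ Set.Icc (0:ℝ) 1)
    (hs : ∀ x, v.s x = 0) (hns : ∀ x, v.ns x = 0)
    (c : I → ℝ) (hc : ∀ x, c x = sup0 {b : ℝ | ∃ y, y ≠ x ∧ b = v.p y x})
    (vstar : SVal I) (hstar : ∃ N : ℕ, ∀ n ≥ N, Tsup^[n] v = vstar) :
    (∀ x, vstar.ns x = c x) ∧
    (∀ x, vstar.s x = inf1 {b : ℝ | ∃ z, z ≠ x ∧ b = c z}) ∧
    (∀ x y : I, x ≠ y →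
      vstar.p x y = max (v.p x y) (inf1 {b : ℝ | ∃ z, z ≠ x ∧ b = c z})) :=
  stmt6_general hcard v hbox hs hns c hc vstar hstar
end
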